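/- arXiv:2603.20796 — 8 statements merged into one kernel-verified Lean document; each statement's English description precedes it below -/
import Mathlib

section
/- Let X and Y be Banach spaces and let G ∈ L(X,Y) with ‖G‖ = 1. Then for every T ∈ L(X,Y), the set S_G(T) is nonempty and compact, and ‖T‖_G = max{|λ| : λ ∈ S_G(T)}. -/
open Filter Topology

variable {𝕜 : Type*} [RCLike 𝕜]

/-- The `G`-norm of an operator `T`:
`‖T‖_G := inf_{δ>0} sup {‖Tx‖ : x ∈ S_X, ‖Gx‖ > 1 - δ}`. -/
noncomputable def Gnorm {X Y : Type*} [NormedAddCommGroup X] [NormedSpace 𝕜 X]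
    [NormedAddCommGroup Y] [NormedSpace 𝕜 Y] (G T : X →L[𝕜] Y) : ℝ :=
  ⨅ δ : {δ : ℝ // 0 < δ},
    sSup {r : ℝ | ∃ x : X, ‖x‖ = 1 ∧ 1 - (δ : ℝ) < ‖G x‖ ∧ r = ‖T x‖}

/-- `S_G(T) := ⋂_{δ>0} closure {y*(Tx) : x ∈ S_X, y* ∈ S_{Y*}, ‖Gx‖ > 1 - δ}`. -/
def SG {X Y : Type*} [NormedAddCommGroup X] [NormedSpace 𝕜 X]
    [NormedAddCommGroup Y] [NormedSpace 𝕜 Y] (G T : X →L[𝕜] Y) : Set 𝕜 :=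
  ⋂ δ ∈ Set.Ioi (0 : ℝ),
    closure {z : 𝕜 | ∃ (x : X) (f : Y →L[𝕜] 𝕜),
      ‖x‖ = 1 ∧ ‖f‖ = 1 ∧ 1 - δ < ‖G x‖ ∧ z = f (T x)}

/-- For Banach spaces `X, Y` and a norm-one operator `G ∈ L(X,Y)`, for every
`T ∈ L(X,Y)` the set `S_G(T)` is nonempty and compact, and
`‖T‖_G = max {|λ| : λ ∈ S_G(T)}`. -/
theorem stmt_0 {X Y : Type*} [NormedAddCommGroup X] [NormedSpace 𝕜 X] [CompleteSpace X]
    [NormedAddCommGroup Y] [NormedSpace 𝕜 Y] [CompleteSpace Y]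
    (G : X →L[𝕜] Y) (hG : ‖G‖ = 1) (T : X →L[𝕜] Y) :
    (SG G T).Nonempty ∧ IsCompact (SG G T) ∧
      IsGreatest ((fun z : 𝕜 => ‖z‖) '' SG G T) (Gnorm G T) := by
  classical
  set A : ℝ → Set 𝕜 := fun δ => {z : 𝕜 | ∃ (x : X) (f : Y →L[𝕜] 𝕜),
      ‖x‖ = 1 ∧ ‖f‖ = 1 ∧ 1 - δ < ‖G x‖ ∧ z = f (T x)} with hA
  set B : ℝ → Set ℝ := fun δ => {r : ℝ | ∃ x : X, ‖x‖ = 1 ∧ 1 - δ < ‖G x‖ ∧ r = ‖T x‖}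
    with hB
  have hGnormEq : Gnorm G T = ⨅ δ : {δ : ℝ // 0 < δ}, sSup (B δ) := rfl
  have hSGEq : SG G T = ⋂ δ ∈ Set.Ioi (0 : ℝ), closure (A δ) := rfl
  -- existence of almost-norming points
  have h1 : ∀ δ : ℝ, 0 < δ → ∃ x : X, ‖x‖ = 1 ∧ 1 - δ < ‖G x‖ := by
    intro δ hδ
    set ε : ℝ := min δ (1/2) with hε
    have hε0 : 0 < ε := lt_min hδ (by norm_num)
    have hεle : ε ≤ 1/2 := min_le_right _ _
    have hlt : 1 - ε < ‖G‖ := by rw [hG]; linarith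
    obtain ⟨x', hx'1, hx'2⟩ := G.exists_lt_apply_of_lt_opNorm hlt
    have hGx'pos : 0 < ‖G x'‖ := lt_of_lt_of_le (by linarith) hx'2.le
    have hx'ne : x' ≠ 0 := by
      intro h; rw [h] at hGx'pos; simp at hGx'pos
    have hx'pos : 0 < ‖x'‖ := norm_pos_iff.mpr hx'ne
    have hcn : ‖((‖x'‖⁻¹ : ℝ) : 𝕜)‖ = ‖x'‖⁻¹ := by
      rw [RCLike.norm_ofReal, abs_of_pos (inv_pos.mpr hx'pos)]
    refine ⟨((‖x'‖⁻¹ : ℝ) : 𝕜) • x', ?_, ?_⟩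
    · rw [norm_smul, hcn, inv_mul_cancel₀ hx'pos.ne']
    · have heq : ‖G (((‖x'‖⁻¹ : ℝ) : 𝕜) • x')‖ = ‖x'‖⁻¹ * ‖G x'‖ := by
        rw [map_smul, norm_smul, hcn]
      rw [heq]
      have h1le : (1:ℝ) ≤ ‖x'‖⁻¹ := (one_le_inv₀ hx'pos).mpr hx'1.le
      have hle2 : ‖G x'‖ ≤ ‖x'‖⁻¹ * ‖G x'‖ := le_mul_of_one_le_left hGx'pos.le h1le
      calc 1 - δ ≤ 1 - ε := by
            have : ε ≤ δ := min_le_left _ _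
            linarith
        _ < ‖G x'‖ := hx'2
        _ ≤ ‖x'‖⁻¹ * ‖G x'‖ := hle2
  have hY : Nontrivial Y := by
    obtain ⟨x, hx, hGx⟩ := h1 (1/2) (by norm_num)
    have : G x ≠ 0 := by
      intro h; rw [h] at hGx; simp at hGx; linarith
    exact ⟨⟨G x, 0, this⟩⟩
  -- nonemptiness of A δ and B δ
  have hBne : ∀ δ : ℝ, 0 < δ → (B δ).Nonempty := by
    intro δ hδ
    obtain ⟨x, hx, hGx⟩ := h1 δ hδ
    exact ⟨‖T x‖, x, hx, hGx, rfl⟩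
  have hBbdd : ∀ δ : ℝ, BddAbove (B δ) := by
    intro δ
    refine ⟨‖T‖, ?_⟩
    rintro r ⟨x, hx, _, rfl⟩
    calc ‖T x‖ ≤ ‖T‖ * ‖x‖ := T.le_opNorm x
      _ = ‖T‖ := by rw [hx, mul_one]
  have hAne : ∀ δ : ℝ, 0 < δ → (A δ).Nonempty := by
    intro δ hδ
    obtain ⟨x, hx, hGx⟩ := h1 δ hδ
    obtain ⟨f, hf1, hf2⟩ := exists_dual_vector' 𝕜 (T x)
    exact ⟨f (T x), x, f, hx, hf1, hGx, rfl⟩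
  have hAsub : ∀ δ : ℝ, A δ ⊆ Metric.closedBall 0 ‖T‖ := by
    intro δ z hz
    obtain ⟨x, f, hx, hf, _, rfl⟩ := hz
    rw [Metric.mem_closedBall, dist_zero_right]
    calc ‖f (T x)‖ ≤ ‖f‖ * ‖T x‖ := f.le_opNorm _
      _ = ‖T x‖ := by rw [hf, one_mul]
      _ ≤ ‖T‖ * ‖x‖ := T.le_opNorm x
      _ = ‖T‖ := by rw [hx, mul_one]
  have hAmono : ∀ δ δ' : ℝ, δ ≤ δ' → A δ ⊆ A δ' := by
    rintro δ δ' h z ⟨x, f, hx, hf, hGx, rfl⟩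
    exact ⟨x, f, hx, hf, lt_of_le_of_lt (by linarith) hGx, rfl⟩
  have hclosSub : ∀ δ : ℝ, closure (A δ) ⊆ Metric.closedBall 0 ‖T‖ := fun δ =>
    closure_minimal (hAsub δ) Metric.isClosed_closedBall
  have hcomp : ∀ δ : ℝ, IsCompact (closure (A δ)) := fun δ =>
    (isCompact_closedBall (0:𝕜) ‖T‖).of_isClosed_subset isClosed_closure (hclosSub δ)
  have hmemSG : ∀ z : 𝕜, z ∈ SG G T ↔ ∀ δ : ℝ, 0 < δ → z ∈ closure (A δ) := by
    intro z
    rw [hSGEq]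
    simp [Set.mem_iInter₂, Set.mem_Ioi]
  -- ‖w‖ ≤ sSup (B δ) for w in closure (A δ)
  have hnormle : ∀ δ : ℝ, 0 < δ → ∀ z ∈ closure (A δ), ‖z‖ ≤ sSup (B δ) := by
    intro δ hδ z hz
    have hsub : A δ ⊆ {w : 𝕜 | ‖w‖ ≤ sSup (B δ)} := by
      rintro w ⟨x, f, hx, hf, hGx, rfl⟩
      have h1 : ‖f (T x)‖ ≤ ‖T x‖ := by
        calc ‖f (T x)‖ ≤ ‖f‖ * ‖T x‖ := f.le_opNorm _
          _ = ‖T x‖ := by rw [hf, one_mul]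
      exact h1.trans (le_csSup (hBbdd δ) ⟨x, hx, hGx, rfl⟩)
    exact closure_minimal hsub (isClosed_le continuous_norm continuous_const) hz
  have hsnn : ∀ δ : {δ : ℝ // 0 < δ}, 0 ≤ sSup (B δ) := by
    intro δ
    obtain ⟨r, hr⟩ := hBne δ δ.2
    obtain ⟨x, _, _, rfl⟩ := hr
    exact (norm_nonneg _).trans (le_csSup (hBbdd δ) ⟨x, ‹_›, ‹_›, rfl⟩)
  have hbdd : BddBelow (Set.range fun δ : {δ : ℝ // 0 < δ} => sSup (B δ)) := by
    refine ⟨0, ?_⟩; rintro r ⟨δ, rfl⟩; exact hsnn δ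
  have hGle : ∀ δ : {δ : ℝ // 0 < δ}, Gnorm G T ≤ sSup (B δ) := by
    intro δ; rw [hGnormEq]; exact ciInf_le hbdd δ
  -- upper bound
  have hub : ∀ z ∈ SG G T, ‖z‖ ≤ Gnorm G T := by
    intro z hz
    rw [hGnormEq]
    refine le_ciInf fun δ => ?_
    exact hnormle δ δ.2 z ((hmemSG z).mp hz δ δ.2)
  -- the maximizing sets
  set K : {δ : ℝ // 0 < δ} → Set 𝕜 :=
    fun δ => closure (A δ) ∩ {z : 𝕜 | Gnorm G T ≤ ‖z‖} with hK
  have hKclosed : ∀ δ, IsClosed (K δ) := fun δ =>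
    isClosed_closure.inter (isClosed_le continuous_const continuous_norm)
  have hKcomp : ∀ δ, IsCompact (K δ) := fun δ =>
    (hcomp δ).inter_right (isClosed_le continuous_const continuous_norm)
  have hKne : ∀ δ, (K δ).Nonempty := by
    intro δ
    obtain ⟨z, hzmem, hzmax⟩ := (hcomp δ).exists_isMaxOn ((hAne δ δ.2).closure)
      continuous_norm.continuousOn
    refine ⟨z, hzmem, ?_⟩
    have hzge : sSup (B δ) ≤ ‖z‖ := by
      by_contra hcon
      push_neg at hcon
      obtain ⟨r, hrB, hr⟩ := exists_lt_of_lt_csSup (hBne δ δ.2) hcon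
      obtain ⟨x, hx, hGx, rfl⟩ := hrB
      obtain ⟨f, hf1, hf2⟩ := exists_dual_vector' 𝕜 (T x)
      have hmem : f (T x) ∈ A δ := ⟨x, f, hx, hf1, hGx, rfl⟩
      have : ‖f (T x)‖ = ‖T x‖ := by
        rw [hf2, RCLike.norm_ofReal, abs_of_nonneg (norm_nonneg _)]
      have hle : ‖f (T x)‖ ≤ ‖z‖ := hzmax (subset_closure hmem)
      rw [this] at hle
      linarith
    exact (hGle δ).trans hzge
  have hKdir : Directed (· ⊇ ·) K := by
    intro δ₁ δ₂
    refine ⟨⟨min δ₁ δ₂, lt_min δ₁.2 δ₂.2⟩, ?_, ?_⟩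
    · exact Set.inter_subset_inter_left _ (closure_mono (hAmono _ _ (min_le_left _ _)))
    · exact Set.inter_subset_inter_left _ (closure_mono (hAmono _ _ (min_le_right _ _)))
  obtain ⟨z₀, hz₀⟩ := IsCompact.nonempty_iInter_of_directed_nonempty_isCompact_isClosed
    K hKdir hKne hKcomp hKclosed
  simp only [Set.mem_iInter] at hz₀
  have hz₀SG : z₀ ∈ SG G T := by
    rw [hmemSG]
    intro δ hδ
    exact (hz₀ ⟨δ, hδ⟩).1
  have hz₀norm : ‖z₀‖ = Gnorm G T :=
    le_antisymm (hub z₀ hz₀SG) (hz₀ ⟨1, one_pos⟩).2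
  refine ⟨⟨z₀, hz₀SG⟩, ?_, ⟨⟨z₀, hz₀SG, hz₀norm⟩, ?_⟩⟩
  · have hsub : SG G T ⊆ closure (A 1) := by
      intro z hz; exact (hmemSG z).mp hz 1 one_pos
    have hclosed : IsClosed (SG G T) := by
      rw [hSGEq]
      exact isClosed_biInter fun δ _ => isClosed_closure
    exact (hcomp 1).of_isClosed_subset hclosed hsub
  · rintro w ⟨z, hz, rfl⟩
    exact hub z hz
end

section
/- Let X and Y be Banach spaces and let G ∈ L(X,Y) with ‖G‖ = 1. Then for every T ∈ L(X,Y), the set S̃_G(T) is nonempty and compact, and ‖T‖_G = max{λ : λ ∈ S̃_G(T)}. -/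
open Filter Topology

variable {𝕜 : Type*} [RCLike 𝕜]

/-- `S̃_G(T) := ⋂_{δ>0} closure {‖Tx‖ : x ∈ S_X, ‖Gx‖ > 1 - δ}`. -/
def StG {X Y : Type*} [NormedAddCommGroup X] [NormedSpace 𝕜 X]
    [NormedAddCommGroup Y] [NormedSpace 𝕜 Y] (G T : X →L[𝕜] Y) : Set ℝ :=
  ⋂ δ ∈ Set.Ioi (0 : ℝ),
    closure {r : ℝ | ∃ x : X, ‖x‖ = 1 ∧ 1 - δ < ‖G x‖ ∧ r = ‖T x‖}

/-- For Banach spaces `X, Y` and a norm-one operator `G ∈ L(X,Y)`, for every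
`T ∈ L(X,Y)` the set `S̃_G(T)` is nonempty and compact, and
`‖T‖_G = max {λ : λ ∈ S̃_G(T)}`. -/
theorem stmt_1 {X Y : Type*} [NormedAddCommGroup X] [NormedSpace 𝕜 X] [CompleteSpace X]
    [NormedAddCommGroup Y] [NormedSpace 𝕜 Y] [CompleteSpace Y]
    (G : X →L[𝕜] Y) (hG : ‖G‖ = 1) (T : X →L[𝕜] Y) :
    (StG G T).Nonempty ∧ IsCompact (StG G T) ∧ IsGreatest (StG G T) (Gnorm G T) := by
  classical
  set A : ℝ → Set ℝ :=
    fun δ => {r : ℝ | ∃ x : X, ‖x‖ = 1 ∧ 1 - δ < ‖G x‖ ∧ r = ‖T x‖} with hA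
  -- each A δ (δ > 0) is nonempty
  have hA_ne : ∀ δ : ℝ, 0 < δ → (A δ).Nonempty := by
    intro δ hδ
    have h1 : max (1 - δ) 0 < ‖G‖ := by
      rw [hG]; exact max_lt (by linarith) one_pos
    obtain ⟨x, hxlt, hx2⟩ := G.exists_lt_apply_of_lt_opNorm h1
    have hx0 : x ≠ 0 := by
      intro h
      rw [h] at hx2
      simp only [map_zero, norm_zero] at hx2
      exact absurd hx2 (not_lt.mpr (le_max_right _ _))
    have hxpos : (0 : ℝ) < ‖x‖ := norm_pos_iff.mpr hx0
    set c : 𝕜 := (‖x‖ : 𝕜)⁻¹ with hc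
    have hnc : ‖c‖ = ‖x‖⁻¹ := by
      rw [hc, norm_inv, RCLike.norm_ofReal, abs_norm]
    refine ⟨‖T (c • x)‖, c • x, ?_, ?_, rfl⟩
    · rw [norm_smul, hnc, inv_mul_cancel₀ (ne_of_gt hxpos)]
    · rw [map_smul, norm_smul, hnc]
      have h1inv : 1 ≤ ‖x‖⁻¹ := by
        rw [le_inv_comm₀ one_pos hxpos]
        simpa using hxlt.le
      calc 1 - δ ≤ max (1 - δ) 0 := le_max_left _ _
        _ < ‖G x‖ := hx2
        _ = 1 * ‖G x‖ := (one_mul _).symm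
        _ ≤ ‖x‖⁻¹ * ‖G x‖ := by
            exact mul_le_mul_of_nonneg_right h1inv (norm_nonneg _)
  -- each A δ is bounded above and nonnegative
  have hA_bdd : ∀ δ : ℝ, BddAbove (A δ) := by
    intro δ
    refine ⟨‖T‖, ?_⟩
    rintro r ⟨x, hx1, _, rfl⟩
    calc ‖T x‖ ≤ ‖T‖ * ‖x‖ := T.le_opNorm x
      _ = ‖T‖ := by rw [hx1, mul_one]
  have hA_nonneg : ∀ δ : ℝ, ∀ r ∈ A δ, (0 : ℝ) ≤ r := by
    rintro δ r ⟨x, _, _, rfl⟩; exact norm_nonneg _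
  have hA_sub : ∀ δ : ℝ, A δ ⊆ Set.Icc 0 ‖T‖ := by
    rintro δ r ⟨x, hx1, _, rfl⟩
    refine ⟨norm_nonneg _, ?_⟩
    calc ‖T x‖ ≤ ‖T‖ * ‖x‖ := T.le_opNorm x
      _ = ‖T‖ := by rw [hx1, mul_one]
  have hA_mono : ∀ δ δ' : ℝ, δ ≤ δ' → A δ ⊆ A δ' := by
    rintro δ δ' h r ⟨x, hx1, hx2, rfl⟩
    exact ⟨x, hx1, lt_of_le_of_lt (by linarith) hx2, rfl⟩
  haveI : Nonempty {δ : ℝ // 0 < δ} := ⟨⟨1, one_pos⟩⟩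
  set s : {δ : ℝ // 0 < δ} → ℝ := fun δ => sSup (A δ) with hs
  have hGn : Gnorm G T = ⨅ δ, s δ := rfl
  have hs_nonneg : ∀ δ, 0 ≤ s δ := by
    intro δ
    obtain ⟨a, ha⟩ := hA_ne δ δ.2
    exact le_trans (hA_nonneg δ a ha) (le_csSup (hA_bdd δ) ha)
  have hsbdd : BddBelow (Set.range s) := by
    refine ⟨0, ?_⟩
    rintro _ ⟨δ, rfl⟩
    exact hs_nonneg δ
  set g : ℝ := ⨅ δ, s δ with hgdef
  have hg_le : ∀ δ, g ≤ s δ := fun δ => ciInf_le hsbdd δ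
  -- g belongs to every closure (A δ)
  have hg_mem : ∀ δ : ℝ, 0 < δ → g ∈ closure (A δ) := by
    intro δ hδ
    rw [Metric.mem_closure_iff]
    intro ε hε
    have hlt : (⨅ δ, s δ) < g + ε := by rw [← hgdef]; linarith
    obtain ⟨δ'', hδ''⟩ := exists_lt_of_ciInf_lt hlt
    set δ' : {δ : ℝ // 0 < δ} := ⟨min δ δ''.1, lt_min hδ δ''.2⟩ with hδ'
    have h1 : s δ' ≤ s δ'' := csSup_le_csSup (hA_bdd _) (hA_ne _ δ'.2)
      (hA_mono _ _ (min_le_right _ _))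
    have h2 : g ≤ s δ' := hg_le δ'
    obtain ⟨a, ha, hlta⟩ := exists_lt_of_lt_csSup (hA_ne _ δ'.2)
      (show g - ε < s δ' by linarith)
    have haA : a ∈ A δ := hA_mono _ _ (min_le_left _ _) ha
    have hale : a ≤ s δ' := le_csSup (hA_bdd _) ha
    refine ⟨a, haA, ?_⟩
    rw [Real.dist_eq, abs_lt]
    constructor <;> linarith
  have hg_in : g ∈ StG G T := by
    rw [StG]
    simp only [Set.mem_iInter, Set.mem_Ioi]
    intro δ hδ
    exact hg_mem δ hδ
  -- upper bound
  have hub : ∀ r ∈ StG G T, r ≤ g := by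
    intro r hr
    rw [StG] at hr
    simp only [Set.mem_iInter, Set.mem_Ioi] at hr
    rw [hgdef]
    refine le_ciInf fun δ => ?_
    have h1 : closure (A δ) ⊆ Set.Iic (s δ) :=
      closure_minimal (fun a ha => le_csSup (hA_bdd _) ha) isClosed_Iic
    exact h1 (hr δ δ.2)
  -- compactness
  have hclosed : IsClosed (StG G T) := by
    rw [StG]
    exact isClosed_biInter fun δ _ => isClosed_closure
  have hsubset : StG G T ⊆ Set.Icc 0 ‖T‖ := by
    intro r hr
    rw [StG] at hr
    simp only [Set.mem_iInter, Set.mem_Ioi] at hr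
    have h1 : closure (A 1) ⊆ Set.Icc 0 ‖T‖ :=
      closure_minimal (hA_sub 1) isClosed_Icc
    exact h1 (hr 1 one_pos)
  refine ⟨⟨g, hg_in⟩, isCompact_Icc.of_isClosed_subset hclosed hsubset, ?_, hub⟩
  exact hg_in
end

section
/- Let X and Y be Banach spaces, G ∈ L(X,Y) with ‖G‖ = 1, and T ∈ L(X,Y). Then S_G(T) = { lim_n y_n*(T x_n) : (x_n) ⊂ S_X, (y_n*) ⊂ S_{Y*}, ‖G x_n‖ → 1 and the limit lim_n y_n*(T x_n) exists }. -/
open Filter Topology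

variable {𝕜 : Type*} [RCLike 𝕜]

/-- For Banach spaces `X, Y`, a norm-one operator `G ∈ L(X,Y)` and `T ∈ L(X,Y)`,
`S_G(T) = { lim_n y_n*(T x_n) : (x_n) ⊂ S_X, (y_n*) ⊂ S_{Y*}, ‖G x_n‖ → 1 }`. -/
theorem stmt_2 {X Y : Type*} [NormedAddCommGroup X] [NormedSpace 𝕜 X] [CompleteSpace X]
    [NormedAddCommGroup Y] [NormedSpace 𝕜 Y] [CompleteSpace Y]
    (G : X →L[𝕜] Y) (hG : ‖G‖ = 1) (T : X →L[𝕜] Y) :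
    SG G T = {z : 𝕜 | ∃ (x : ℕ → X) (y : ℕ → (Y →L[𝕜] 𝕜)),
      (∀ n, ‖x n‖ = 1) ∧ (∀ n, ‖y n‖ = 1) ∧
      Tendsto (fun n => ‖G (x n)‖) atTop (𝓝 1) ∧
      Tendsto (fun n => (y n) (T (x n))) atTop (𝓝 z)} := by
  ext z
  simp only [SG, Set.mem_iInter, Set.mem_setOf_eq, Set.mem_Ioi]
  constructor
  · intro h
    have key : ∀ n : ℕ, ∃ (x : X) (f : Y →L[𝕜] 𝕜), ‖x‖ = 1 ∧ ‖f‖ = 1 ∧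
        1 - (1 / (n + 1) : ℝ) < ‖G x‖ ∧ ‖f (T x) - z‖ < 1 / (n + 1) := by
      intro n
      have hpos : (0 : ℝ) < 1 / (n + 1) := by positivity
      have hz := h (1 / (n + 1)) hpos
      rw [Metric.mem_closure_iff] at hz
      obtain ⟨w, hw, hdist⟩ := hz (1 / (n + 1)) hpos
      obtain ⟨x, f, hx, hf, hGx, rfl⟩ := hw
      exact ⟨x, f, hx, hf, hGx, by rwa [dist_comm, dist_eq_norm] at hdist⟩
    choose x y hx hy hGx hyz using key
    have hlim : Tendsto (fun n : ℕ => (1 / (n + 1) : ℝ)) atTop (𝓝 0) :=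
      tendsto_one_div_add_atTop_nhds_zero_nat
    refine ⟨x, y, hx, hy, ?_, ?_⟩
    · have hub : ∀ n, ‖G (x n)‖ ≤ 1 := fun n => by
        calc ‖G (x n)‖ ≤ ‖G‖ * ‖x n‖ := G.le_opNorm _
        _ = 1 := by rw [hG, hx n]; ring
      have h1 : Tendsto (fun n : ℕ => 1 - (1 / (n + 1) : ℝ)) atTop (𝓝 1) := by
        simpa using tendsto_const_nhds.sub hlim
      exact tendsto_of_tendsto_of_tendsto_of_le_of_le h1 tendsto_const_nhds
        (fun n => (hGx n).le) hub
    · rw [tendsto_iff_norm_sub_tendsto_zero]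
      exact squeeze_zero (fun n => norm_nonneg _) (fun n => (hyz n).le) hlim
  · rintro ⟨x, y, hx, hy, hGx, hyz⟩ δ hδ
    rw [Metric.mem_closure_iff]
    intro ε hε
    have h1 : ∀ᶠ n in atTop, 1 - δ < ‖G (x n)‖ :=
      hGx.eventually (eventually_gt_nhds (by linarith))
    have h2 : ∀ᶠ n in atTop, dist ((y n) (T (x n))) z < ε :=
      hyz.eventually (Metric.ball_mem_nhds z hε)
    obtain ⟨n, hn1, hn2⟩ := (h1.and h2).exists
    exact ⟨(y n) (T (x n)), ⟨x n, y n, hx n, hy n, hn1, rfl⟩, by rwa [dist_comm]⟩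
end

section
/- Let X and Y be Banach spaces, G ∈ L(X,Y) with ‖G‖ = 1, and T ∈ L(X,Y). Then V_G(T) = { lim_n y_n*(T x_n) : (x_n) ⊂ S_X, (y_n*) ⊂ S_{Y*}, Re y_n*(G x_n) → 1 and the limit lim_n y_n*(T x_n) exists }. -/
/-!
Since `Re y*(Gx) ≤ ‖y*‖ ‖G‖ ‖x‖ = 1`, a point of `⋂_{δ>0} closure {…}` is, for `δ = 1/(n+1)`, within
`1/(n+1)` of some `y_n*(T x_n)` with `Re y_n*(G x_n) ∈ (1 - 1/(n+1), 1]`; squeezing gives the two limits.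
Conversely, if `Re y_n*(G x_n) → 1` then for each `δ > 0` the terms `y_n*(T x_n)` eventually lie in the
`δ`-set, so their limit lies in its closure.
-/

open Filter Topology

variable {𝕜 : Type*} [RCLike 𝕜]

/-- The numerical range of `T` with respect to `G`:
`V_G(T) := ⋂_{δ>0} closure {y*(Tx) : x ∈ S_X, y* ∈ S_{Y*}, Re y*(Gx) > 1 - δ}`. -/
def VG {X Y : Type*} [NormedAddCommGroup X] [NormedSpace 𝕜 X]
    [NormedAddCommGroup Y] [NormedSpace 𝕜 Y] (G T : X →L[𝕜] Y) : Set 𝕜 :=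
  ⋂ δ ∈ Set.Ioi (0 : ℝ),
    closure {z : 𝕜 | ∃ (x : X) (f : Y →L[𝕜] 𝕜),
      ‖x‖ = 1 ∧ ‖f‖ = 1 ∧ 1 - δ < RCLike.re (f (G x)) ∧ z = f (T x)}

theorem mem_iInter_closure_image_superlevel_iff {ι E : Type*} [PseudoMetricSpace E]
    {s : Set ι} {φ : ι → ℝ} {a : ℝ} (hφ : ∀ i ∈ s, φ i ≤ a) (g : ι → E) (z : E) :
    z ∈ ⋂ δ ∈ Set.Ioi (0 : ℝ), closure (g '' {i ∈ s | a - δ < φ i}) ↔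
      ∃ u : ℕ → ι, (∀ n, u n ∈ s) ∧ Tendsto (φ ∘ u) atTop (𝓝 a) ∧
        Tendsto (g ∘ u) atTop (𝓝 z) := by
  simp only [Set.mem_iInter, Set.mem_Ioi]
  constructor
  · intro hz
    have hε : ∀ n : ℕ, (0 : ℝ) < 1 / (n + 1) := fun n => Nat.one_div_pos_of_nat
    have approx : ∀ n : ℕ, ∃ i ∈ s, a - 1 / (n + 1) < φ i ∧ dist (g i) z < 1 / (n + 1) :=
      fun n => by
        obtain ⟨w, ⟨i, ⟨hi, hφi⟩, rfl⟩, hw⟩ := Metric.mem_closure_iff.mp (hz _ (hε n)) _ (hε n)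
        exact ⟨i, hi, hφi, by rwa [dist_comm]⟩
    choose u hus hφu hgu using approx
    refine ⟨u, hus, ?_, ?_⟩
    · have hlow : Tendsto (fun n : ℕ => a - 1 / ((n : ℝ) + 1)) atTop (𝓝 a) := by
        simpa using tendsto_one_div_add_atTop_nhds_zero_nat.const_sub a
      exact tendsto_of_tendsto_of_tendsto_of_le_of_le hlow tendsto_const_nhds
        (fun n => (hφu n).le) (fun n => hφ _ (hus n))
    · exact tendsto_iff_dist_tendsto_zero.mpr <| squeeze_zero (fun n => dist_nonneg)
        (fun n => (hgu n).le) tendsto_one_div_add_atTop_nhds_zero_nat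
  · rintro ⟨u, hus, hφu, hgu⟩ δ hδ
    refine mem_closure_of_tendsto hgu ?_
    filter_upwards [hφu.eventually (eventually_gt_nhds (sub_lt_self a hδ))] with n hn
    exact ⟨u n, ⟨hus n, hn⟩, rfl⟩

theorem re_apply_apply_le_one {X Y : Type*} [NormedAddCommGroup X] [NormedSpace 𝕜 X]
    [NormedAddCommGroup Y] [NormedSpace 𝕜 Y] {G : X →L[𝕜] Y} (hG : ‖G‖ ≤ 1)
    {f : Y →L[𝕜] 𝕜} (hf : ‖f‖ ≤ 1) {x : X} (hx : ‖x‖ ≤ 1) : RCLike.re (f (G x)) ≤ 1 :=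
  calc RCLike.re (f (G x)) ≤ ‖f (G x)‖ := RCLike.re_le_norm _
    _ ≤ ‖f‖ * (‖G‖ * ‖x‖) := f.le_of_opNorm_le_of_le le_rfl (G.le_opNorm x)
    _ ≤ 1 := mul_le_one₀ hf (by positivity) (mul_le_one₀ hG (norm_nonneg x) hx)

theorem stmt_4_general {X Y : Type*} [NormedAddCommGroup X] [NormedSpace 𝕜 X]
    [NormedAddCommGroup Y] [NormedSpace 𝕜 Y]
    (G : X →L[𝕜] Y) (hG : ‖G‖ = 1) (T : X →L[𝕜] Y) :
    VG G T = {z : 𝕜 | ∃ (x : ℕ → X) (y : ℕ → (Y →L[𝕜] 𝕜)),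
      (∀ n, ‖x n‖ = 1) ∧ (∀ n, ‖y n‖ = 1) ∧
      Tendsto (fun n => RCLike.re ((y n) (G (x n)))) atTop (𝓝 1) ∧
      Tendsto (fun n => (y n) (T (x n))) atTop (𝓝 z)} := by
  set s : Set (X × (Y →L[𝕜] 𝕜)) := {p | ‖p.1‖ = 1 ∧ ‖p.2‖ = 1}
  have hφ : ∀ p ∈ s, RCLike.re (p.2 (G p.1)) ≤ 1 := fun p hp =>
    re_apply_apply_le_one hG.le hp.2.le hp.1.le
  have hsets : ∀ δ : ℝ, {z : 𝕜 | ∃ (x : X) (f : Y →L[𝕜] 𝕜),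
      ‖x‖ = 1 ∧ ‖f‖ = 1 ∧ 1 - δ < RCLike.re (f (G x)) ∧ z = f (T x)} =
      (fun p => p.2 (T p.1)) '' {p ∈ s | 1 - δ < RCLike.re (p.2 (G p.1))} := by
    intro δ
    ext z
    simp [s, and_assoc, eq_comm]
  ext z
  simp only [VG, hsets]
  rw [mem_iInter_closure_image_superlevel_iff hφ]
  constructor
  · rintro ⟨u, hu, hφu, hTu⟩
    exact ⟨fun n => (u n).1, fun n => (u n).2, fun n => (hu n).1, fun n => (hu n).2, hφu, hTu⟩
  · rintro ⟨x, y, hx, hy, hφu, hTu⟩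
    exact ⟨fun n => (x n, y n), fun n => ⟨hx n, hy n⟩, hφu, hTu⟩

/-- For Banach spaces `X, Y`, a norm-one operator `G ∈ L(X,Y)` and `T ∈ L(X,Y)`,
`V_G(T) = { lim_n y_n*(T x_n) : (x_n) ⊂ S_X, (y_n*) ⊂ S_{Y*}, Re y_n*(G x_n) → 1 }`. -/
theorem stmt_4 {X Y : Type*} [NormedAddCommGroup X] [NormedSpace 𝕜 X] [CompleteSpace X]
    [NormedAddCommGroup Y] [NormedSpace 𝕜 Y] [CompleteSpace Y]
    (G : X →L[𝕜] Y) (hG : ‖G‖ = 1) (T : X →L[𝕜] Y) :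
    VG G T = {z : 𝕜 | ∃ (x : ℕ → X) (y : ℕ → (Y →L[𝕜] 𝕜)),
      (∀ n, ‖x n‖ = 1) ∧ (∀ n, ‖y n‖ = 1) ∧
      Tendsto (fun n => RCLike.re ((y n) (G (x n)))) atTop (𝓝 1) ∧
      Tendsto (fun n => (y n) (T (x n))) atTop (𝓝 z)} :=
  stmt_4_general G hG T
end

section
/- Let X and Y be finite-dimensional Banach spaces, G ∈ L(X,Y) with ‖G‖ = 1, and T ∈ L(X,Y). Then S_G(T) = { y*(Tx) : x ∈ S_X, y* ∈ S_{Y*}, ‖Gx‖ = 1 }. -/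
/-!
`S_X × S_{Y*}` is compact and `‖G x‖ ≤ 1` on it.  For `z ∈ S_G(T)`, the closed sets
`{(x, f) : f (T x) = z, ‖G x‖ ≥ 1 - δ}` are nonempty, so the compact fibre `{(x, f) : f (T x) = z}`
is nonempty and `‖G x‖` attains on it a maximum that is `≥ 1 - δ` for every `δ`, hence `= 1`.
-/

open Filter Topology

variable {𝕜 : Type*} [RCLike 𝕜]

open Set in
theorem iInter_closure_image_superlevel_subset {P Z : Type*} [TopologicalSpace P]
    [TopologicalSpace Z] [T2Space Z] {K : Set P} (hK : IsCompact K) {Φ : P → Z}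
    (hΦ : Continuous Φ) {g : P → ℝ} (hg : Continuous g) (c : ℝ) :
    ⋂ δ ∈ Ioi (0 : ℝ), closure (Φ '' (K ∩ {p | c - δ < g p})) ⊆ Φ '' (K ∩ {p | c ≤ g p}) := by
  intro z hz
  have hz_mem (δ : ℝ) (hδ : 0 < δ) : ∃ p ∈ K, c - δ ≤ g p ∧ Φ p = z := by
    have hclosed : IsClosed (Φ '' (K ∩ {p | c - δ ≤ g p})) :=
      ((hK.inter_right (isClosed_le continuous_const hg)).image hΦ).isClosed
    have hsub := closure_minimal
      (image_mono (inter_subset_inter_right K fun p (hp : c - δ < g p) => hp.le)) hclosed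
    obtain ⟨p, ⟨hpK, hp⟩, rfl⟩ := hsub (mem_iInter₂.mp hz δ hδ)
    exact ⟨p, hpK, hp, rfl⟩
  have hfiber : IsCompact (K ∩ Φ ⁻¹' {z}) := hK.inter_right (isClosed_singleton.preimage hΦ)
  have hne : (K ∩ Φ ⁻¹' {z}).Nonempty := by
    obtain ⟨p, hpK, -, hp⟩ := hz_mem 1 one_pos
    exact ⟨p, hpK, hp⟩
  obtain ⟨p, ⟨hpK, hpz⟩, hmax⟩ := hfiber.exists_isMaxOn hne hg.continuousOn
  refine ⟨p, ⟨hpK, show c ≤ g p from le_of_forall_pos_le_add fun δ hδ => ?_⟩, hpz⟩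
  obtain ⟨q, hqK, hq, hqz⟩ := hz_mem δ hδ
  linarith [isMaxOn_iff.mp hmax q ⟨hqK, hqz⟩]

theorem setOf_dual_apply_sphere_eq_image {X Y : Type*} [NormedAddCommGroup X]
    [NormedSpace 𝕜 X] [NormedAddCommGroup Y] [NormedSpace 𝕜 Y] (T : X →L[𝕜] Y) (Q : X → Prop) :
    {z : 𝕜 | ∃ (x : X) (f : Y →L[𝕜] 𝕜), ‖x‖ = 1 ∧ ‖f‖ = 1 ∧ Q x ∧ z = f (T x)} =
      (fun p : X × (Y →L[𝕜] 𝕜) => p.2 (T p.1)) ''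
        (Metric.sphere 0 1 ×ˢ Metric.sphere 0 1 ∩ {p | Q p.1}) := by
  ext z
  simp only [Set.mem_ofPred_eq, Set.mem_image, Set.mem_inter_iff, Set.mem_prod,
    mem_sphere_zero_iff_norm, Prod.exists]
  constructor
  · rintro ⟨x, f, hx, hf, hQ, rfl⟩
    exact ⟨x, f, ⟨⟨hx, hf⟩, hQ⟩, rfl⟩
  · rintro ⟨x, f, ⟨⟨hx, hf⟩, hQ⟩, rfl⟩
    exact ⟨x, f, hx, hf, hQ, rfl⟩

/-- For finite-dimensional Banach spaces `X, Y`, a norm-one `G ∈ L(X,Y)` and `T ∈ L(X,Y)`,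
`S_G(T) = { y*(Tx) : x ∈ S_X, y* ∈ S_{Y*}, ‖Gx‖ = 1 }`. -/
theorem stmt_5 {X Y : Type*} [NormedAddCommGroup X] [NormedSpace 𝕜 X] [FiniteDimensional 𝕜 X]
    [NormedAddCommGroup Y] [NormedSpace 𝕜 Y] [FiniteDimensional 𝕜 Y]
    (G : X →L[𝕜] Y) (hG : ‖G‖ = 1) (T : X →L[𝕜] Y) :
    SG G T = {z : 𝕜 | ∃ (x : X) (f : Y →L[𝕜] 𝕜),
      ‖x‖ = 1 ∧ ‖f‖ = 1 ∧ ‖G x‖ = 1 ∧ z = f (T x)} := by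
  have : ProperSpace X := FiniteDimensional.proper_rclike 𝕜 X
  have : ProperSpace (Y →L[𝕜] 𝕜) := FiniteDimensional.proper_rclike 𝕜 _
  have hGx_le (x : X) (hx : ‖x‖ = 1) : ‖G x‖ ≤ 1 := by
    simpa [hG, hx] using G.le_opNorm x
  refine subset_antisymm (fun z hz => ?_) ?_
  · simp only [SG, setOf_dual_apply_sphere_eq_image] at hz
    obtain ⟨⟨x, f⟩, ⟨⟨hx, hf⟩, hGx⟩, rfl⟩ := iInter_closure_image_superlevel_subset
      ((isCompact_sphere 0 1).prod (isCompact_sphere 0 1))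
      (isBoundedBilinearMap_apply.continuous.comp (continuous_snd.prodMk (T.continuous.comp
        continuous_fst))) (G.continuous.comp continuous_fst).norm 1 hz
    rw [mem_sphere_zero_iff_norm] at hx hf
    exact ⟨x, f, hx, hf, le_antisymm (hGx_le x hx) hGx, rfl⟩
  · rintro z ⟨x, f, hx, hf, hGx, rfl⟩
    refine Set.mem_iInter₂.mpr fun δ hδ => subset_closure ⟨x, f, hx, hf, ?_, rfl⟩
    rw [hGx]
    linarith [Set.mem_Ioi.mp hδ]
end

section
/- Let X and Y be finite-dimensional Banach spaces, G ∈ L(X,Y) with ‖G‖ = 1, and T ∈ L(X,Y). Then V_G(T) = { y*(Tx) : x ∈ S_X, y* ∈ S_{Y*}, y*(Gx) = 1 }. -/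
open Filter Topology
set_option maxHeartbeats 800000
set_option synthInstance.maxHeartbeats 200000

lemma aux_eq_one {𝕜 : Type*} [RCLike 𝕜] (z : 𝕜) (h1 : (1:ℝ) ≤ RCLike.re z) (h2 : ‖z‖ ≤ 1) :
    z = 1 := by
  have hre : RCLike.re z = 1 := le_antisymm ((RCLike.re_le_norm z).trans h2) h1
  have hn : ‖z‖ = 1 := le_antisymm h2 (by calc (1:ℝ) = RCLike.re z := hre.symm
                                               _ ≤ ‖z‖ := RCLike.re_le_norm z)
  have h2' : RCLike.re z * RCLike.re z + RCLike.im z * RCLike.im z = ‖z‖ ^ 2 := by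
    rw [← RCLike.normSq_apply, RCLike.normSq_eq_def']
  rw [hn, hre] at h2'
  have him : RCLike.im z = 0 := by nlinarith [sq_nonneg (RCLike.im z)]
  apply RCLike.ext <;> simp [hre, him]

variable {𝕜 : Type*} [RCLike 𝕜]

/-- For finite-dimensional Banach spaces `X, Y`, a norm-one `G ∈ L(X,Y)` and `T ∈ L(X,Y)`,
`V_G(T) = { y*(Tx) : x ∈ S_X, y* ∈ S_{Y*}, y*(Gx) = 1 }`. -/
theorem stmt_6 {X Y : Type*} [NormedAddCommGroup X] [NormedSpace 𝕜 X] [FiniteDimensional 𝕜 X]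
    [NormedAddCommGroup Y] [NormedSpace 𝕜 Y] [FiniteDimensional 𝕜 Y]
    (G : X →L[𝕜] Y) (hG : ‖G‖ = 1) (T : X →L[𝕜] Y) :
    VG G T = {z : 𝕜 | ∃ (x : X) (f : Y →L[𝕜] 𝕜),
      ‖x‖ = 1 ∧ ‖f‖ = 1 ∧ f (G x) = 1 ∧ z = f (T x)} := by
  unfold VG
  ext z
  simp only [Set.mem_iInter, Set.mem_Ioi, Set.mem_setOf_eq]
  constructor
  · intro hz
    -- extract sequences
    have H : ∀ n : ℕ, ∃ (x : X) (f : Y →L[𝕜] 𝕜),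
        ‖x‖ = 1 ∧ ‖f‖ = 1 ∧ 1 - 1/(n+1) < RCLike.re (f (G x)) ∧
        dist z (f (T x)) < 1/(n+1) := by
      intro n
      have hpos : (0:ℝ) < 1/(n+1) := by positivity
      have := hz (1/(n+1)) hpos
      rw [Metric.mem_closure_iff] at this
      obtain ⟨w, hw, hdw⟩ := this (1/(n+1)) hpos
      obtain ⟨x, f, hx, hf, hre, rfl⟩ := hw
      exact ⟨x, f, hx, hf, hre, hdw⟩
    choose x f hx hf hre hd using H
    haveI : ProperSpace X := FiniteDimensional.proper 𝕜 X
    haveI : FiniteDimensional 𝕜 (Y →L[𝕜] 𝕜) := inferInstance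
    haveI : ProperSpace (Y →L[𝕜] 𝕜) := FiniteDimensional.proper 𝕜 _
    -- compactness
    have hK : IsCompact ((Metric.sphere (0:X) 1) ×ˢ (Metric.sphere (0 : Y →L[𝕜] 𝕜) 1)) :=
      (isCompact_sphere 0 1).prod (isCompact_sphere 0 1)
    have hmem : ∀ n, (x n, f n) ∈ (Metric.sphere (0:X) 1) ×ˢ (Metric.sphere (0 : Y →L[𝕜] 𝕜) 1) := by
      intro n
      exact ⟨mem_sphere_zero_iff_norm.2 (hx n), mem_sphere_zero_iff_norm.2 (hf n)⟩
    obtain ⟨⟨a, g⟩, haK, φ, hφ, hconv⟩ := hK.tendsto_subseq hmem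
    have ha : ‖a‖ = 1 := mem_sphere_zero_iff_norm.1 haK.1
    have hg : ‖g‖ = 1 := mem_sphere_zero_iff_norm.1 haK.2
    -- evaluation continuity
    have contEv : ∀ S : X →L[𝕜] Y, Continuous (fun p : X × (Y →L[𝕜] 𝕜) => p.2 (S p.1)) := by
      intro S
      exact isBoundedBilinearMap_apply.continuous.comp
        (continuous_snd.prodMk (S.continuous.comp continuous_fst))
    have hTlim : Tendsto (fun n => f (φ n) (T (x (φ n)))) atTop (𝓝 (g (T a))) :=
      ((contEv T).tendsto (a, g)).comp hconv
    have hGlim : Tendsto (fun n => f (φ n) (G (x (φ n)))) atTop (𝓝 (g (G a))) :=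
      ((contEv G).tendsto (a, g)).comp hconv
    -- z = g (T a)
    have hzero : Tendsto (fun n : ℕ => (1:ℝ)/(n+1)) atTop (𝓝 0) :=
      tendsto_one_div_add_atTop_nhds_zero_nat
    have hzlim : Tendsto (fun n => f n (T (x n))) atTop (𝓝 z) := by
      rw [tendsto_iff_dist_tendsto_zero]
      apply squeeze_zero (fun n => dist_nonneg) (fun n => ((dist_comm z _ ▸ hd n)).le) hzero
    have hzlim' : Tendsto (fun n => f (φ n) (T (x (φ n)))) atTop (𝓝 z) :=
      hzlim.comp hφ.tendsto_atTop
    have hzeq : z = g (T a) := tendsto_nhds_unique hzlim' hTlim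
    -- re (g (G a)) ≥ 1
    have hrelim : Tendsto (fun n => RCLike.re (f (φ n) (G (x (φ n))))) atTop
        (𝓝 (RCLike.re (g (G a)))) := (RCLike.continuous_re.tendsto _).comp hGlim
    have hlow : Tendsto (fun n : ℕ => 1 - (1:ℝ)/(φ n + 1)) atTop (𝓝 1) := by
      have : Tendsto (fun n : ℕ => 1 - (1:ℝ)/(n + 1)) atTop (𝓝 (1 - 0)) :=
        tendsto_const_nhds.sub hzero
      rw [sub_zero] at this
      exact this.comp hφ.tendsto_atTop
    have hge : (1:ℝ) ≤ RCLike.re (g (G a)) :=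
      le_of_tendsto_of_tendsto' hlow hrelim (fun n => (hre (φ n)).le)
    have hle : ‖g (G a)‖ ≤ 1 := by
      calc ‖g (G a)‖ ≤ ‖g‖ * ‖G a‖ := g.le_opNorm _
        _ ≤ ‖g‖ * (‖G‖ * ‖a‖) := by gcongr; exact G.le_opNorm a
        _ = 1 := by rw [hg, hG, ha]; ring
    exact ⟨a, g, ha, hg, aux_eq_one _ hge hle, hzeq⟩
  · rintro ⟨x, f, hx, hf, hG1, rfl⟩
    intro δ hδ
    apply subset_closure
    exact ⟨x, f, hx, hf, by rw [hG1]; simp [hδ], rfl⟩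
end

section
/- Let X and Y be Banach spaces and let G ∈ L(X,Y) with ‖G‖ = 1. Then for T ∈ L(X,Y) the following are equivalent: (i) max_{ω ∈ S¹} ‖G + ωT‖_G = 1 + ‖T‖_G, i.e., there exists ω ∈ 𝕂 with |ω| = 1 such that ‖G + ωT‖_G = 1 + ‖T‖_G; (ii) ν_G(T) = ‖T‖_G. -/
open Filter Topology

variable {𝕜 : Type*} [RCLike 𝕜]

/-- The numerical radius of `T` with respect to `G`: `ν_G(T) := max {|λ| : λ ∈ V_G(T)}`. -/
noncomputable def nuG {X Y : Type*} [NormedAddCommGroup X] [NormedSpace 𝕜 X]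
    [NormedAddCommGroup Y] [NormedSpace 𝕜 Y] (G T : X →L[𝕜] Y) : ℝ :=
  sSup {r : ℝ | ∃ z ∈ VG G T, r = ‖z‖}

/-! If `z ∈ V_G(T)` and `ω z = |z|`, testing `G + ωT` against the functionals that produce `z`
gives `‖G + ωT‖_G ≥ 1 + |z|`, while `‖G + ωT‖_G ≤ 1 + ‖T‖_G` always; so a point of `V_G(T)` of
maximal modulus `ν_G(T) = ‖T‖_G` yields (i). Conversely, if `‖G + ωT‖_G = 1 + ‖T‖_G`, a functional
norming `(G + ωT) x` for an almost extremal `x` almost norms `G x` while `ω f (T x)` almost attains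
`‖T‖_G`. This gives points of modulus close to `‖T‖_G` in every approximate numerical range
`{y*(Tx) : Re y*(Gx) > 1 - δ}`, and nested compactness produces a point of `V_G(T)` of modulus
at least `‖T‖_G`. -/

open Metric

theorem ContinuousLinearMap.exists_norm_eq_one_lt_apply_of_lt_opNorm {X Y : Type*}
    [NormedAddCommGroup X] [NormedSpace 𝕜 X] [NormedAddCommGroup Y] [NormedSpace 𝕜 Y]
    (G : X →L[𝕜] Y) {r : ℝ} (hr₀ : 0 ≤ r) (hr : r < ‖G‖) : ∃ x : X, ‖x‖ = 1 ∧ r < ‖G x‖ := by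
  lift r to NNReal using hr₀
  obtain ⟨x, hx, hGx⟩ := G.exists_nnnorm_eq_one_lt_apply_of_lt_opNNNorm (r := r) hr
  exact ⟨x, by simpa using congrArg NNReal.toReal hx, hGx⟩

theorem RCLike.exists_norm_eq_one_mul_eq_norm (z : 𝕜) : ∃ ω : 𝕜, ‖ω‖ = 1 ∧ ω * z = ‖z‖ := by
  rcases eq_or_ne z 0 with rfl | hz
  · exact ⟨1, norm_one, by simp⟩
  have hz' : (‖z‖ : 𝕜) ≠ 0 := RCLike.ofReal_ne_zero.2 (norm_ne_zero_iff.2 hz)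
  refine ⟨starRingEnd 𝕜 z / ‖z‖, ?_, ?_⟩
  · rw [norm_div, RCLike.norm_conj, RCLike.norm_ofReal, abs_norm, div_self (norm_ne_zero_iff.2 hz)]
  · rw [div_mul_eq_mul_div, RCLike.conj_mul, sq, mul_div_assoc, div_self hz', mul_one]

theorem RCLike.re_mul_le_norm_of_norm_le_one {ω : 𝕜} (hω : ‖ω‖ ≤ 1) (w : 𝕜) :
    RCLike.re (ω * w) ≤ ‖w‖ :=
  (RCLike.re_le_norm _).trans (by rw [norm_mul]; exact mul_le_of_le_one_left (norm_nonneg w) hω)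

section GNumericalRange

variable {X Y : Type*} [NormedAddCommGroup X] [NormedSpace 𝕜 X]
  [NormedAddCommGroup Y] [NormedSpace 𝕜 Y] {G T : X →L[𝕜] Y} {δ : ℝ}

noncomputable def GnormAt (G T : X →L[𝕜] Y) (δ : ℝ) : ℝ :=
  sSup {r : ℝ | ∃ x : X, ‖x‖ = 1 ∧ 1 - δ < ‖G x‖ ∧ r = ‖T x‖}

def VGAt (G T : X →L[𝕜] Y) (δ : ℝ) : Set 𝕜 :=
  {z : 𝕜 | ∃ (x : X) (f : Y →L[𝕜] 𝕜),
    ‖x‖ = 1 ∧ ‖f‖ = 1 ∧ 1 - δ < RCLike.re (f (G x)) ∧ z = f (T x)}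

theorem mem_VG_iff {z : 𝕜} : z ∈ VG G T ↔ ∀ δ > 0, z ∈ closure (VGAt G T δ) := by
  simp only [VG, VGAt, Set.mem_iInter, Set.mem_Ioi]

theorem exists_norm_eq_one_lt_norm_apply (hG : ‖G‖ = 1) (hδ : 0 < δ) :
    ∃ x : X, ‖x‖ = 1 ∧ 1 - δ < ‖G x‖ := by
  obtain ⟨x, hx, hGx⟩ := G.exists_norm_eq_one_lt_apply_of_lt_opNorm (le_max_right (1 - δ) 0)
    (by rw [hG]; exact max_lt (by linarith) one_pos)
  exact ⟨x, hx, (le_max_left _ _).trans_lt hGx⟩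

theorem norm_apply_le_GnormAt (T : X →L[𝕜] Y) {x : X} (hx : ‖x‖ = 1) (hGx : 1 - δ < ‖G x‖) :
    ‖T x‖ ≤ GnormAt G T δ := by
  refine le_csSup ⟨‖T‖, ?_⟩ ⟨x, hx, hGx, rfl⟩
  rintro r ⟨y, hy, -, rfl⟩
  simpa [hy] using T.le_opNorm y

theorem GnormAt_le (hG : ‖G‖ = 1) (hδ : 0 < δ) {c : ℝ}
    (h : ∀ x : X, ‖x‖ = 1 → 1 - δ < ‖G x‖ → ‖T x‖ ≤ c) : GnormAt G T δ ≤ c := by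
  obtain ⟨x, hx, hGx⟩ := exists_norm_eq_one_lt_norm_apply hG hδ
  refine csSup_le ⟨_, x, hx, hGx, rfl⟩ ?_
  rintro r ⟨y, hy, hGy, rfl⟩
  exact h y hy hGy

theorem exists_lt_norm_apply_of_lt_GnormAt (hG : ‖G‖ = 1) (hδ : 0 < δ) {r : ℝ}
    (h : r < GnormAt G T δ) : ∃ x : X, ‖x‖ = 1 ∧ 1 - δ < ‖G x‖ ∧ r < ‖T x‖ := by
  by_contra! hr
  exact h.not_ge (GnormAt_le hG hδ hr)

theorem GnormAt_nonneg (hG : ‖G‖ = 1) (T : X →L[𝕜] Y) (hδ : 0 < δ) : 0 ≤ GnormAt G T δ := by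
  obtain ⟨x, hx, hGx⟩ := exists_norm_eq_one_lt_norm_apply hG hδ
  exact (norm_nonneg _).trans (norm_apply_le_GnormAt T hx hGx)

theorem GnormAt_mono (hG : ‖G‖ = 1) {δ' : ℝ} (hδ' : 0 < δ') (h : δ' ≤ δ) :
    GnormAt G T δ' ≤ GnormAt G T δ :=
  GnormAt_le hG hδ' fun _ hx hGx => norm_apply_le_GnormAt T hx (by linarith)

theorem Gnorm_le_GnormAt (hG : ‖G‖ = 1) (T : X →L[𝕜] Y) (hδ : 0 < δ) :
    Gnorm G T ≤ GnormAt G T δ :=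
  ciInf_le (f := fun δ' : {δ : ℝ // 0 < δ} => GnormAt G T δ')
    ⟨0, Set.forall_mem_range.2 fun δ' => GnormAt_nonneg hG T δ'.2⟩ ⟨δ, hδ⟩

theorem le_Gnorm {c : ℝ} (h : ∀ δ > 0, c ≤ GnormAt G T δ) : c ≤ Gnorm G T :=
  le_ciInf fun δ => h δ δ.2

theorem Gnorm_nonneg (hG : ‖G‖ = 1) (T : X →L[𝕜] Y) : 0 ≤ Gnorm G T :=
  le_Gnorm fun _ hδ => GnormAt_nonneg hG T hδ

theorem exists_GnormAt_lt {c : ℝ} (h : Gnorm G T < c) : ∃ δ > 0, GnormAt G T δ < c := by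
  obtain ⟨⟨δ, hδ⟩, h⟩ := exists_lt_of_ciInf_lt h
  exact ⟨δ, hδ, h⟩

theorem norm_le_GnormAt_of_mem_VGAt {z : 𝕜} (hz : z ∈ VGAt G T δ) : ‖z‖ ≤ GnormAt G T δ := by
  obtain ⟨x, f, hx, hf, hre, rfl⟩ := hz
  have hGx : 1 - δ < ‖G x‖ :=
    hre.trans_le ((RCLike.re_le_norm _).trans (by simpa [hf] using f.le_opNorm (G x)))
  calc ‖f (T x)‖ ≤ ‖T x‖ := by simpa [hf] using f.le_opNorm (T x)
    _ ≤ GnormAt G T δ := norm_apply_le_GnormAt T hx hGx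

theorem VGAt_subset_closedBall : VGAt G T δ ⊆ closedBall 0 ‖T‖ := by
  rintro _ ⟨x, f, hx, hf, -, rfl⟩
  rw [mem_closedBall_zero_iff]
  calc ‖f (T x)‖ ≤ ‖T x‖ := by simpa [hf] using f.le_opNorm (T x)
    _ ≤ ‖T‖ := by simpa [hx] using T.le_opNorm x

theorem VGAt_mono {δ' : ℝ} (h : δ' ≤ δ) : VGAt G T δ' ⊆ VGAt G T δ := by
  rintro _ ⟨x, f, hx, hf, hre, rfl⟩
  exact ⟨x, f, hx, hf, by linarith, rfl⟩

theorem VGAt_nonempty (hG : ‖G‖ = 1) (T : X →L[𝕜] Y) (hδ : 0 < δ) : (VGAt G T δ).Nonempty := by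
  obtain ⟨x, hx, hGx⟩ := G.exists_norm_eq_one_lt_apply_of_lt_opNorm (le_max_right (1 - δ) 0)
    (by rw [hG]; exact max_lt (by linarith) one_pos)
  have hGx0 : ‖G x‖ ≠ 0 := ((le_max_right _ _).trans_lt hGx).ne'
  obtain ⟨f, hf, hfGx⟩ := exists_dual_vector 𝕜 (G x) hGx0
  refine ⟨_, x, f, hx, hf, ?_, rfl⟩
  rw [hfGx, RCLike.ofReal_re]
  exact (le_max_left _ _).trans_lt hGx

theorem isCompact_closure_VGAt : IsCompact (closure (VGAt G T δ)) :=
  (isCompact_closedBall 0 ‖T‖).closure_of_subset VGAt_subset_closedBall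

theorem isCompact_VG : IsCompact (VG G T) :=
  isCompact_closure_VGAt.of_isClosed_subset (isClosed_biInter fun _ _ => isClosed_closure)
    fun _ hz => mem_VG_iff.1 hz 1 one_pos

theorem norm_le_Gnorm_of_mem_VG {z : 𝕜} (hz : z ∈ VG G T) : ‖z‖ ≤ Gnorm G T :=
  le_Gnorm fun δ hδ =>
    closure_minimal (fun _ hw => norm_le_GnormAt_of_mem_VGAt hw)
      (isClosed_le continuous_norm continuous_const) (mem_VG_iff.1 hz δ hδ)

theorem exists_mem_VG_le_norm (hG : ‖G‖ = 1) {c : ℝ}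
    (h : ∀ δ > 0, ∀ ε > 0, ∃ z ∈ VGAt G T δ, c - ε ≤ ‖z‖) : ∃ z ∈ VG G T, c ≤ ‖z‖ := by
  let K : {δ : ℝ // 0 < δ} → Set 𝕜 := fun δ => closure (VGAt G T δ) ∩ {z | c ≤ ‖z‖}
  have hK_closed (δ) : IsClosed (K δ) :=
    isClosed_closure.inter (isClosed_le continuous_const continuous_norm)
  have hK_compact (δ) : IsCompact (K δ) :=
    isCompact_closure_VGAt.of_isClosed_subset (hK_closed δ) Set.inter_subset_left
  have hK_nonempty : ∀ δ, (K δ).Nonempty := by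
    rintro ⟨δ, hδ⟩
    -- a point of maximal modulus in `closure (VGAt G T δ)` has modulus at least `c`
    obtain ⟨z, hz, hmax⟩ := isCompact_closure_VGAt.exists_isMaxOn
      ((VGAt_nonempty hG T hδ).mono subset_closure) continuous_norm.continuousOn
    refine ⟨z, hz, show c ≤ ‖z‖ from le_of_forall_pos_le_add fun ε hε => ?_⟩
    obtain ⟨w, hw, hcw⟩ := h δ hδ ε hε
    linarith [show ‖w‖ ≤ ‖z‖ from hmax (subset_closure hw)]
  have hK_directed : Directed (· ⊇ ·) K := by
    rintro ⟨δ₁, h₁⟩ ⟨δ₂, h₂⟩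
    exact ⟨⟨min δ₁ δ₂, lt_min h₁ h₂⟩,
      Set.inter_subset_inter_left _ (closure_mono (VGAt_mono (min_le_left _ _))),
      Set.inter_subset_inter_left _ (closure_mono (VGAt_mono (min_le_right _ _)))⟩
  obtain ⟨z, hz⟩ := IsCompact.nonempty_iInter_of_directed_nonempty_isCompact_isClosed K
    hK_directed hK_nonempty hK_compact hK_closed
  rw [Set.mem_iInter] at hz
  exact ⟨z, mem_VG_iff.2 fun δ hδ => (hz ⟨δ, hδ⟩).1, (hz ⟨1, one_pos⟩).2⟩

theorem VG_nonempty (hG : ‖G‖ = 1) (T : X →L[𝕜] Y) : (VG G T).Nonempty := by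
  obtain ⟨z, hz, -⟩ := exists_mem_VG_le_norm (c := 0) hG fun δ hδ ε hε => by
    obtain ⟨z, hz⟩ := VGAt_nonempty hG T hδ
    exact ⟨z, hz, by linarith [norm_nonneg z]⟩
  exact ⟨z, hz⟩

theorem nuG_eq_sSup_image (G T : X →L[𝕜] Y) : nuG G T = sSup (norm '' VG G T) := by
  simp only [nuG, Set.image, eq_comm]

theorem norm_le_nuG {z : 𝕜} (hz : z ∈ VG G T) : ‖z‖ ≤ nuG G T := by
  rw [nuG_eq_sSup_image]
  exact le_csSup (isCompact_VG.image continuous_norm).bddAbove (Set.mem_image_of_mem _ hz)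

theorem nuG_le_Gnorm (hG : ‖G‖ = 1) : nuG G T ≤ Gnorm G T := by
  rw [nuG_eq_sSup_image]
  exact Real.sSup_le (by rintro _ ⟨z, hz, rfl⟩; exact norm_le_Gnorm_of_mem_VG hz)
    (Gnorm_nonneg hG T)

theorem exists_mem_VG_norm_eq_nuG (hG : ‖G‖ = 1) : ∃ z ∈ VG G T, ‖z‖ = nuG G T := by
  rw [nuG_eq_sSup_image]
  exact (isCompact_VG.image continuous_norm).sSup_mem ((VG_nonempty hG T).image _)

theorem apply_add_smul_apply (f : Y →L[𝕜] 𝕜) (ω : 𝕜) (x : X) :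
    f ((G + ω • T) x) = f (G x) + ω * f (T x) := by
  simp

theorem Gnorm_add_smul_le (hG : ‖G‖ = 1) {ω : 𝕜} (hω : ‖ω‖ ≤ 1) :
    Gnorm G (G + ω • T) ≤ 1 + Gnorm G T := by
  suffices Gnorm G (G + ω • T) - 1 ≤ Gnorm G T by linarith
  refine le_Gnorm fun δ hδ => ?_
  have hsum : GnormAt G (G + ω • T) δ ≤ 1 + GnormAt G T δ := by
    refine GnormAt_le hG hδ fun x hx hGx => ?_
    calc ‖(G + ω • T) x‖ ≤ ‖G x‖ + ‖ω‖ * ‖T x‖ := by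
          simpa [norm_smul] using norm_add_le (G x) (ω • T x)
      _ ≤ 1 + GnormAt G T δ := add_le_add (by simpa [hx, hG] using G.le_opNorm x)
        (mul_le_of_le_one_left (norm_nonneg _) hω |>.trans (norm_apply_le_GnormAt T hx hGx))
  linarith [Gnorm_le_GnormAt hG (G + ω • T) hδ]

theorem re_mul_add_le_GnormAt_of_mem_closure {z : 𝕜} (hz : z ∈ closure (VGAt G T δ)) (ω : 𝕜) :
    1 - δ + RCLike.re (ω * z) ≤ GnormAt G (G + ω • T) δ := by
  refine closure_minimal (fun w hw => ?_)
    (isClosed_le (f := fun w : 𝕜 => 1 - δ + RCLike.re (ω * w)) (by fun_prop) continuous_const) hz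
  obtain ⟨x, f, hx, hf, hre, rfl⟩ := hw
  have hnorm (y : Y) : ‖f y‖ ≤ ‖y‖ := by simpa [hf] using f.le_opNorm y
  have hGx : 1 - δ < ‖G x‖ := hre.trans_le ((RCLike.re_le_norm _).trans (hnorm _))
  calc 1 - δ + RCLike.re (ω * f (T x)) ≤ RCLike.re (f ((G + ω • T) x)) := by
        rw [apply_add_smul_apply, map_add]; linarith
    _ ≤ ‖(G + ω • T) x‖ := (RCLike.re_le_norm _).trans (hnorm _)
    _ ≤ GnormAt G (G + ω • T) δ := norm_apply_le_GnormAt _ hx hGx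

theorem one_add_norm_le_Gnorm_add_smul (hG : ‖G‖ = 1) {z ω : 𝕜} (hz : z ∈ VG G T)
    (hωz : ω * z = ‖z‖) : 1 + ‖z‖ ≤ Gnorm G (G + ω • T) := by
  refine le_Gnorm fun δ hδ => le_of_forall_pos_le_add fun ε hε => ?_
  have hδε : 0 < min δ ε := lt_min hδ hε
  have h := re_mul_add_le_GnormAt_of_mem_closure (mem_VG_iff.1 hz _ hδε) ω
  rw [hωz, RCLike.ofReal_re] at h
  linarith [GnormAt_mono (T := G + ω • T) hG hδε (min_le_left δ ε), min_le_right δ ε]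

-- A functional norming `(G + ωT) x` nearly norms `G x`, since `ω f (T x)` contributes at most
-- `c + η` to the norm, which exceeds `1 + c - η`.
theorem exists_mem_VGAt_of_lt_norm_add_smul_apply [Nontrivial Y] (hG : ‖G‖ = 1) {ω : 𝕜}
    (hω : ‖ω‖ ≤ 1) {x : X} (hx : ‖x‖ = 1) {c η : ℝ} (hTx : ‖T x‖ ≤ c + η)
    (hGTx : 1 + c - η < ‖(G + ω • T) x‖) : ∃ z ∈ VGAt G T (2 * η), c - η ≤ ‖z‖ := by
  obtain ⟨f, hf, hfv⟩ := exists_dual_vector' 𝕜 ((G + ω • T) x)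
  have hnorm (y : Y) : ‖f y‖ ≤ ‖y‖ := by simpa [hf] using f.le_opNorm y
  have hsplit : RCLike.re (f (G x)) + RCLike.re (ω * f (T x)) = ‖(G + ω • T) x‖ := by
    rw [← map_add, ← apply_add_smul_apply, hfv, RCLike.ofReal_re]
  have hGx : RCLike.re (f (G x)) ≤ 1 :=
    (RCLike.re_le_norm _).trans ((hnorm _).trans (by simpa [hx, hG] using G.le_opNorm x))
  have hfTx := RCLike.re_mul_le_norm_of_norm_le_one hω (f (T x))
  exact ⟨f (T x), ⟨x, f, hx, hf, by linarith [hnorm (T x)], rfl⟩, by linarith⟩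

theorem exists_mem_VGAt_le_norm_of_Gnorm_add_smul_eq (hG : ‖G‖ = 1) {ω : 𝕜} (hω : ‖ω‖ ≤ 1)
    (heq : Gnorm G (G + ω • T) = 1 + Gnorm G T) (hδ : 0 < δ) {ε : ℝ} (hε : 0 < ε) :
    ∃ z ∈ VGAt G T δ, Gnorm G T - ε ≤ ‖z‖ := by
  have : Nontrivial Y := by
    obtain ⟨x, -, hGx⟩ := exists_norm_eq_one_lt_norm_apply hG one_pos
    exact nontrivial_of_ne (G x) 0 (norm_pos_iff.1 (by linarith))
  set η := min ε (δ / 2)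
  have hη : 0 < η := lt_min hε (half_pos hδ)
  obtain ⟨δ₂, hδ₂, hTδ₂⟩ := exists_GnormAt_lt (lt_add_of_pos_right (Gnorm G T) hη)
  obtain ⟨x, hx, hGx, hGTx⟩ := exists_lt_norm_apply_of_lt_GnormAt (T := G + ω • T)
    (r := 1 + Gnorm G T - η) hG hδ₂ (by linarith [Gnorm_le_GnormAt hG (G + ω • T) hδ₂])
  obtain ⟨z, hz, hcz⟩ := exists_mem_VGAt_of_lt_norm_add_smul_apply hG hω hx
    ((norm_apply_le_GnormAt T hx hGx).trans hTδ₂.le) hGTx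
  exact ⟨z, VGAt_mono (by linarith [min_le_right ε (δ / 2)]) hz,
    by linarith [min_le_left ε (δ / 2)]⟩

end GNumericalRange

theorem stmt_7_general {X Y : Type*} [NormedAddCommGroup X] [NormedSpace 𝕜 X]
    [NormedAddCommGroup Y] [NormedSpace 𝕜 Y]
    (G : X →L[𝕜] Y) (hG : ‖G‖ = 1) (T : X →L[𝕜] Y) :
    (∃ ω : 𝕜, ‖ω‖ = 1 ∧ Gnorm G (G + ω • T) = 1 + Gnorm G T) ↔ nuG G T = Gnorm G T := by
  constructor
  · rintro ⟨ω, hω, heq⟩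
    obtain ⟨z, hz, hcz⟩ := exists_mem_VG_le_norm hG fun δ hδ ε hε =>
      exists_mem_VGAt_le_norm_of_Gnorm_add_smul_eq hG hω.le heq hδ hε
    exact le_antisymm (nuG_le_Gnorm hG) (hcz.trans (norm_le_nuG hz))
  · intro hnu
    obtain ⟨z, hz, hzν⟩ := exists_mem_VG_norm_eq_nuG (T := T) hG
    obtain ⟨ω, hω, hωz⟩ := RCLike.exists_norm_eq_one_mul_eq_norm z
    refine ⟨ω, hω, le_antisymm (Gnorm_add_smul_le hG hω.le) ?_⟩
    simpa only [hzν, hnu] using one_add_norm_le_Gnorm_add_smul hG hz hωz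

/-- For Banach spaces `X, Y`, a norm-one operator `G ∈ L(X,Y)` and `T ∈ L(X,Y)`, the
following are equivalent: (i) `max_{ω ∈ S¹} ‖G + ωT‖_G = 1 + ‖T‖_G`, i.e., there is
`ω` with `|ω| = 1` and `‖G + ωT‖_G = 1 + ‖T‖_G`; (ii) `ν_G(T) = ‖T‖_G`. -/
theorem stmt_7 {X Y : Type*} [NormedAddCommGroup X] [NormedSpace 𝕜 X] [CompleteSpace X]
    [NormedAddCommGroup Y] [NormedSpace 𝕜 Y] [CompleteSpace Y]
    (G : X →L[𝕜] Y) (hG : ‖G‖ = 1) (T : X →L[𝕜] Y) :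
    (∃ ω : 𝕜, ‖ω‖ = 1 ∧ Gnorm G (G + ω • T) = 1 + Gnorm G T) ↔ nuG G T = Gnorm G T :=
  stmt_7_general G hG T
end

section
/- Let X and Y be Banach spaces, let G ∈ L(X,Y) with ‖G‖ = 1, and let T ∈ L(X,Y). Define C := { ψ ∈ B_{L(X,Y)*} : there exists a net (x_α, y_α*) in S_X × S_{Y*} with ‖G x_α‖ → 1 and ψ_{x_α, y_α*} → ψ in the weak* topology }. Then sup{ |λ| : there exists a net (x_α, y_α*) in S_X × S_{Y*} with ‖G x_α‖ → 1 and y_α*(T x_α) → λ } = sup_{ψ ∈ C} |ψ(T)|. -/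
open Filter Topology

universe u v w

variable {𝕜 : Type u} [RCLike 𝕜]

lemma exists_limit_fun {X : Type v} {Y : Type w} [NormedAddCommGroup X] [NormedSpace 𝕜 X]
    [NormedAddCommGroup Y] [NormedSpace 𝕜 Y]
    {ι : Type*} (l : Filter ι) [hl : l.NeBot] (x : ι → X) (y : ι → (Y →L[𝕜] 𝕜))
    (hx : ∀ i, ‖x i‖ = 1) (hy : ∀ i, ‖y i‖ = 1) :
    ∃ ψ : (X →L[𝕜] Y) →L[𝕜] 𝕜, ‖ψ‖ ≤ 1 ∧
      ∀ S : X →L[𝕜] Y, Tendsto (fun i => (y i) (S (x i))) (Ultrafilter.of l) (𝓝 (ψ S)) := by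
  set U := Ultrafilter.of l with hU
  have hbd : ∀ (S : X →L[𝕜] Y) (i : ι), ‖(y i) (S (x i))‖ ≤ ‖S‖ := by
    intro S i
    calc ‖(y i) (S (x i))‖ ≤ ‖y i‖ * ‖S (x i)‖ := (y i).le_opNorm _
    _ ≤ 1 * (‖S‖ * ‖x i‖) := by
        rw [hy i, one_mul, one_mul]; exact S.le_opNorm _
    _ = ‖S‖ := by rw [hx i, one_mul, mul_one]
  have key : ∀ S : X →L[𝕜] Y, ∃ c : 𝕜,
      Tendsto (fun i => (y i) (S (x i))) U (𝓝 c) ∧ ‖c‖ ≤ ‖S‖ := by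
    intro S
    have hcpt : IsCompact (Metric.closedBall (0 : 𝕜) ‖S‖) := isCompact_closedBall _ _
    have hmem : (Ultrafilter.map (fun i => (y i) (S (x i))) U : Filter 𝕜)
        ≤ 𝓟 (Metric.closedBall (0 : 𝕜) ‖S‖) := by
      have : Tendsto (fun i => (y i) (S (x i))) (U : Filter ι) (𝓟 (Metric.closedBall (0 : 𝕜) ‖S‖)) :=
        Filter.tendsto_principal.2 (Filter.Eventually.of_forall fun i =>
          Metric.mem_closedBall.2 (by simpa using hbd S i))
      exact this
    obtain ⟨c, hc, hle⟩ := hcpt.ultrafilter_le_nhds (Ultrafilter.map (fun i => (y i) (S (x i))) U) hmem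
    exact ⟨c, hle, by simpa using Metric.mem_closedBall.1 hc⟩
  choose F hF hFle using key
  have hadd : ∀ S S' : X →L[𝕜] Y, F (S + S') = F S + F S' := by
    intro S S'
    have h1 : Tendsto (fun i => (y i) ((S + S') (x i))) U (𝓝 (F S + F S')) := by
      have := (hF S).add (hF S')
      simpa [map_add] using this
    exact tendsto_nhds_unique (hF (S + S')) h1
  have hsmul : ∀ (c : 𝕜) (S : X →L[𝕜] Y), F (c • S) = c • F S := by
    intro c S
    have h1 : Tendsto (fun i => (y i) ((c • S) (x i))) U (𝓝 (c • F S)) := by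
      have := (hF S).const_smul c
      simpa [map_smul, smul_eq_mul] using this
    exact tendsto_nhds_unique (hF (c • S)) h1
  refine ⟨LinearMap.mkContinuous ⟨⟨F, fun a b => hadd a b⟩, hsmul⟩ 1 (fun S => by simpa using hFle S), ?_, ?_⟩
  · exact LinearMap.mkContinuous_norm_le _ zero_le_one _
  · intro S; exact hF S


/-- The set `C` of functionals `ψ` in the unit ball of `L(X,Y)*` that are weak* limits
of a net of functionals `ψ_{x_α, y_α*} = y_α* ⊗ x_α` with `x_α ∈ S_X`, `y_α* ∈ S_{Y*}`
and `‖G x_α‖ → 1`.  (A net is encoded by an index type together with a proper filter;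
weak* convergence is pointwise convergence on `L(X,Y)`.) -/
def Cset {X : Type v} {Y : Type w} [NormedAddCommGroup X] [NormedSpace 𝕜 X]
    [NormedAddCommGroup Y] [NormedSpace 𝕜 Y] (G : X →L[𝕜] Y) :
    Set ((X →L[𝕜] Y) →L[𝕜] 𝕜) :=
  {ψ | ‖ψ‖ ≤ 1 ∧ ∃ (ι : Type (max u v w)) (l : Filter ι), l.NeBot ∧
    ∃ (x : ι → X) (y : ι → (Y →L[𝕜] 𝕜)),
      (∀ i, ‖x i‖ = 1) ∧ (∀ i, ‖y i‖ = 1) ∧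
      Tendsto (fun i => ‖G (x i)‖) l (𝓝 1) ∧
      (∀ S : X →L[𝕜] Y, Tendsto (fun i => (y i) (S (x i))) l (𝓝 (ψ S)))}

/-- For Banach spaces `X, Y`, a norm-one `G ∈ L(X,Y)` and `T ∈ L(X,Y)`:
`sup {|λ| : ∃ net (x_α, y_α*) ⊂ S_X × S_{Y*}, ‖G x_α‖ → 1, y_α*(T x_α) → λ}
  = sup_{ψ ∈ C} |ψ(T)|`. -/
theorem stmt_12 {X : Type v} {Y : Type w}
    [NormedAddCommGroup X] [NormedSpace 𝕜 X] [CompleteSpace X]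
    [NormedAddCommGroup Y] [NormedSpace 𝕜 Y] [CompleteSpace Y]
    (G : X →L[𝕜] Y) (hG : ‖G‖ = 1) (T : X →L[𝕜] Y) :
    sSup {r : ℝ | ∃ (lam : 𝕜) (ι : Type (max u v w)) (l : Filter ι), l.NeBot ∧
        ∃ (x : ι → X) (y : ι → (Y →L[𝕜] 𝕜)),
          (∀ i, ‖x i‖ = 1) ∧ (∀ i, ‖y i‖ = 1) ∧
          Tendsto (fun i => ‖G (x i)‖) l (𝓝 1) ∧
          Tendsto (fun i => (y i) (T (x i))) l (𝓝 lam) ∧ r = ‖lam‖}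
      = sSup {r : ℝ | ∃ ψ ∈ Cset G, r = ‖ψ T‖} := by
  congr 1
  ext r
  constructor
  · rintro ⟨lam, ι, l, hl, x, y, hx, hy, hGx, hT, hr⟩
    obtain ⟨ψ, hψ1, hψ2⟩ := exists_limit_fun l x y hx hy
    have hle : (Ultrafilter.of l : Filter ι) ≤ l := Ultrafilter.of_le l
    have hlam : lam = ψ T :=
      tendsto_nhds_unique (hT.mono_left hle) (hψ2 T)
    exact ⟨ψ, ⟨hψ1, ι, (Ultrafilter.of l : Filter ι), Ultrafilter.neBot _, x, y, hx, hy,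
      hGx.mono_left hle, hψ2⟩, by rw [hr, hlam]⟩
  · rintro ⟨ψ, ⟨hψ1, ι, l, hl, x, y, hx, hy, hGx, hψ2⟩, hr⟩
    exact ⟨ψ T, ι, l, hl, x, y, hx, hy, hGx, hψ2 T, hr⟩
end
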